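/- Let (θ, λ, w) ∈ Θ×Λ×W be feasible for the linearly-relaxed saddle-point problem with reduced Lagrangian L_r(θ,λ,w) = ⟨μ_θ - μ_{π_E}, c_w - T*_γ u_λ⟩, and let π_θ = π_{μ_θ}. Then δ_C(π_θ, π_E) - δ_C(π_A, π_E) ≤ ε_sad(θ,λ,w) + ε_approx, where ε_sad is the saddle-point residual and ε_approx ≤ (2/(1-γ))(β·min_{θ'} ‖μ_{θ'} - μ_{π_A}‖₁ + min_{λ'} ‖u_{λ'} - V^{π_θ}_{c_{i_θ}}‖_∞), with i_θ = argmax_i (ρ_{c_i}(π_θ) - ρ_{c_i}(π_E)). -/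

import Mathlib

open Finset

variable {X A : Type*} [Fintype X] [Fintype A] [DecidableEq X] [DecidableEq A]
  [Nonempty X] [Nonempty A]

/-- A finite discounted Markov decision process. -/
structure FinMDP (X A : Type*) [Fintype X] [Fintype A] where
  P : X → A → X → ℝ
  P_nonneg : ∀ x a x', 0 ≤ P x a x'
  P_sum : ∀ x a, ∑ x', P x a x' = 1
  ν : X → ℝ
  ν_nonneg : ∀ x, 0 ≤ ν x
  ν_sum : ∑ x, ν x = 1
  γ : ℝ
  γ_pos : 0 < γ
  γ_lt_one : γ < 1

/-- A stationary Markov policy. -/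
def FinMDP.IsPolicy (π : X → A → ℝ) : Prop :=
  (∀ x a, 0 ≤ π x a) ∧ ∀ x, ∑ a, π x a = 1

namespace FinMDP

variable (M : FinMDP X A)

/-- The state-action distribution at time `t` of policy `π` started from `ν'`. -/
noncomputable def saDist (ν' : X → ℝ) (π : X → A → ℝ) : ℕ → X × A → ℝ
  | 0 => fun p => ν' p.1 * π p.1 p.2
  | t + 1 => fun p => (∑ q : X × A, saDist ν' π t q * M.P q.1 q.2 p.1) * π p.1 p.2

/-- The normalized discounted occupancy measure of `π` started from `ν'`. -/
noncomputable def occFrom (ν' : X → ℝ) (π : X → A → ℝ) (p : X × A) : ℝ :=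
  (1 - M.γ) * ∑' t : ℕ, M.γ ^ t * M.saDist ν' π t p

/-- The normalized discounted occupancy measure of `π` (from the initial distribution). -/
noncomputable def occ (π : X → A → ℝ) : X × A → ℝ :=
  M.occFrom M.ν π

/-- The (normalized) value function of policy `π` for cost `c`. -/
noncomputable def value (c : X × A → ℝ) (π : X → A → ℝ) (x : X) : ℝ :=
  ∑ p : X × A, M.occFrom (fun y => if y = x then 1 else 0) π p * c p

/-- The total expected (normalized) discounted cost `ρ_c(π) = ⟨μ_π, c⟩`. -/
noncomputable def cost (c : X × A → ℝ) (π : X → A → ℝ) : ℝ :=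
  ∑ p : X × A, M.occ π p * c p

/-- The Bellman flow operator `T_γ μ = (1/(1-γ)) (B - γ P)ᵀ μ`. -/
noncomputable def Tflow (μ : X × A → ℝ) (x' : X) : ℝ :=
  (1 / (1 - M.γ)) * ((∑ a, μ (x', a)) - M.γ * ∑ p : X × A, μ p * M.P p.1 p.2 x')

/-- The adjoint operator `T*_γ u = (1/(1-γ)) (B - γ P) u`. -/
noncomputable def Tadj (u : X → ℝ) (p : X × A) : ℝ :=
  (1 / (1 - M.γ)) * (u p.1 - M.γ * ∑ x', M.P p.1 p.2 x' * u x')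

/-- `π` is an optimal policy for the forward RL problem with cost `c`. -/
def IsOptimal (c : X × A → ℝ) (π : X → A → ℝ) : Prop :=
  IsPolicy π ∧ ∀ π', IsPolicy π' → M.cost c π ≤ M.cost c π'

/-- The optimal value function `V*_c(x) = min_π V_c^π(x)`. -/
noncomputable def Vstar (c : X × A → ℝ) (x : X) : ℝ :=
  sInf {v | ∃ π, IsPolicy π ∧ v = M.value c π x}

end FinMDP

/-- The policy induced by a state-action distribution:
`π_μ(a|x) = μ(x,a) / ∑_{a'} μ(x,a')` (uniform on zero-mass states). -/
noncomputable def inducedPolicy (μ : X × A → ℝ) (x : X) (a : A) : ℝ :=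
  if (∑ a' : A, μ (x, a')) = 0 then (1 : ℝ) / (Fintype.card A)
  else μ (x, a) / ∑ a' : A, μ (x, a')

/-- `μ` is a probability distribution on state-action pairs. -/
def IsDist (μ : X × A → ℝ) : Prop := (∀ p, 0 ≤ μ p) ∧ ∑ p : X × A, μ p = 1

/-- Membership in the probability simplex `Δ_{[n]}`. -/
def simplexPt {n : ℕ} (w : Fin n → ℝ) : Prop := (∀ i, 0 ≤ w i) ∧ ∑ i, w i = 1

/-- The `ℓ¹` norm of a finitely supported vector. -/
noncomputable def l1 {ι : Type*} [Fintype ι] (f : ι → ℝ) : ℝ := ∑ i, |f i|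

/-- The `ℓ∞` norm of a finitely supported vector. -/
noncomputable def linf {ι : Type*} [Fintype ι] [Nonempty ι] (f : ι → ℝ) : ℝ :=
  Finset.univ.sup' Finset.univ_nonempty fun i => |f i|

/-- The cost `c_w = ∑ᵢ wᵢ cᵢ` parameterized by weights `w`. -/
noncomputable def costW {nc : ℕ} (c : Fin nc → X × A → ℝ) (w : Fin nc → ℝ) :
    X × A → ℝ :=
  fun p => ∑ i, w i * c i p

/-- The objective of the dual LP `(D_{π_E})`. -/
noncomputable def dualObj {nc : ℕ} (M : FinMDP X A) (c : Fin nc → X × A → ℝ)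
    (πE : X → A → ℝ) (u : X → ℝ) (w : Fin nc → ℝ) : ℝ :=
  ∑ p : X × A, M.occ πE p * (M.Tadj u p - costW c w p)

/-- Feasibility for the dual LP `(D_{π_E})`. -/
def dualFeasible {nc : ℕ} (M : FinMDP X A) (c : Fin nc → X × A → ℝ)
    (u : X → ℝ) (w : Fin nc → ℝ) : Prop :=
  simplexPt w ∧ ∀ p, 0 ≤ costW c w p - M.Tadj u p

/-- Optimality for the dual LP `(D_{π_E})`. -/
def dualOptimal {nc : ℕ} (M : FinMDP X A) (c : Fin nc → X × A → ℝ)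
    (πE : X → A → ℝ) (u : X → ℝ) (w : Fin nc → ℝ) : Prop :=
  dualFeasible M c u w ∧
    ∀ u' w', dualFeasible M c u' w' → dualObj M c πE u' w' ≤ dualObj M c πE u w

/-- The `C`-distance `δ_C(π, π_E) = max_i (ρ_{c_i}(π) - ρ_{c_i}(π_E))`. -/
noncomputable def gapMax {nc : ℕ} [NeZero nc] (M : FinMDP X A)
    (c : Fin nc → X × A → ℝ) (πE π : X → A → ℝ) : ℝ :=
  haveI : Nonempty (Fin nc) := ⟨⟨0, Nat.pos_of_ne_zero (NeZero.ne nc)⟩⟩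
  Finset.univ.sup' Finset.univ_nonempty fun i => M.cost (c i) π - M.cost (c i) πE

/-- `π_A` is an apprentice policy: it minimizes `δ_C(·, π_E)` over stationary policies. -/
def IsApprentice {nc : ℕ} [NeZero nc] (M : FinMDP X A)
    (c : Fin nc → X × A → ℝ) (πE πA : X → A → ℝ) : Prop :=
  FinMDP.IsPolicy πA ∧
    ∀ π, FinMDP.IsPolicy π → gapMax M c πE πA ≤ gapMax M c πE π

/-- The parameter set `Λ = {λ : ‖λ‖₂ ≤ β/√n_u}`. -/
def lamSet (nu : ℕ) (β : ℝ) : Set (Fin nu → ℝ) :=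
  {l | Real.sqrt (∑ k, l k ^ 2) ≤ β / Real.sqrt nu}

/-- The reduced Lagrangian `L_r(θ, λ, w) = ⟨μ_θ - μ_{π_E}, c_w - T*_γ u_λ⟩`. -/
noncomputable def Lr {nm nu nc : ℕ} (M : FinMDP X A)
    (Φ : Fin nm → X × A → ℝ) (Ψ : Fin nu → X → ℝ) (c : Fin nc → X × A → ℝ)
    (πE : X → A → ℝ) (θ : Fin nm → ℝ) (lam : Fin nu → ℝ) (w : Fin nc → ℝ) : ℝ :=
  ∑ p : X × A, ((∑ i, θ i * Φ i p) - M.occ πE p) *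
    ((∑ j, w j * c j p) - M.Tadj (fun x => ∑ k, lam k * Ψ k x) p)

/-- The saddle-point residual of a point `(θ, λ, w)` for the reduced Lagrangian. -/
noncomputable def epsSad {nm nu nc : ℕ} (M : FinMDP X A)
    (Φ : Fin nm → X × A → ℝ) (Ψ : Fin nu → X → ℝ) (c : Fin nc → X × A → ℝ)
    (πE : X → A → ℝ) (β : ℝ)
    (θ : Fin nm → ℝ) (lam : Fin nu → ℝ) (w : Fin nc → ℝ) : ℝ :=
  sSup {v | ∃ lam' ∈ lamSet nu β, ∃ w', simplexPt w' ∧ v = Lr M Φ Ψ c πE θ lam' w'} -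
    sInf {v | ∃ θ', simplexPt θ' ∧ v = Lr M Φ Ψ c πE θ' lam w}

/-!
Occupancy measures satisfy the flow constraint `T_γ μ_π = ν`, so `⟨μ_π, T*_γ u⟩ = ⟨ν, u⟩` for every
policy `π`; and the Bellman equation of `π_μ` gives `⟨μ, c - T*_γ V_c^{π_μ}⟩ = 0` for every `μ ≥ 0`.
Together they yield, for every `u`, the identity
`ρ_c(π_μ) - ρ_c(π_E) = ⟨μ - μ_{π_E}, c - T*_γ u⟩ + ⟨T_γ μ - ν, u - V_c^{π_μ}⟩`.
Taken at `c = c_{i_θ}`, `u = u_{λ'}`, it bounds `δ_C(π_θ, π_E)` by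
`L_r(θ, λ', e_{i_θ}) + 2/(1-γ) ‖u_{λ'} - V‖_∞`. On the other side, since
`⟨μ_{π_A} - μ_{π_E}, T*_γ u⟩ = 0`, `L_r(θ', λ, w)` differs from
`∑ⱼ wⱼ (ρ_{c_j}(π_A) - ρ_{c_j}(π_E)) ≤ δ_C(π_A, π_E)` by at most `2β/(1-γ) ‖μ_{θ'} - μ_{π_A}‖₁`.
The two Lagrangian values differ by at most `ε_sad`; it remains to minimize over `θ'` and `λ'`.
-/

lemma abs_le_linf {ι : Type*} [Fintype ι] [Nonempty ι] (f : ι → ℝ) (i : ι) : |f i| ≤ linf f :=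
  le_sup' (fun i => |f i|) (mem_univ i)

lemma abs_sum_mul_le_l1_mul {ι : Type*} [Fintype ι] (f g : ι → ℝ) {B : ℝ}
    (hg : ∀ i, |g i| ≤ B) : |∑ i, f i * g i| ≤ l1 f * B :=
  (abs_sum_le_sum_abs _ _).trans <| by
    rw [l1, sum_mul]
    exact sum_le_sum fun i _ => by
      rw [abs_mul]
      exact mul_le_mul_of_nonneg_left (hg i) (abs_nonneg _)

lemma simplexPt_single {n : ℕ} (i : Fin n) : simplexPt (Pi.single i (1 : ℝ)) :=
  ⟨fun j => by by_cases h : j = i <;> simp [h], by simp⟩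

lemma abs_sum_mul_le_one_of_simplexPt {n : ℕ} {w v : Fin n → ℝ} (hw : simplexPt w)
    (hv : ∀ j, |v j| ≤ 1) : |∑ j, w j * v j| ≤ 1 := by
  have := abs_sum_mul_le_l1_mul w v hv
  rwa [l1, sum_congr rfl fun j _ => abs_of_nonneg (hw.1 j), hw.2, mul_one] at this

lemma sum_abs_le_of_mem_lamSet {n : ℕ} {β : ℝ} (hβ : 0 ≤ β) {lam : Fin n → ℝ}
    (hlam : lam ∈ lamSet n β) : ∑ k, |lam k| ≤ β := by
  rcases Nat.eq_zero_or_pos n with rfl | hn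
  · simpa using hβ
  have hcs := sq_sum_le_card_mul_sum_sq (s := univ) (f := fun k => |lam k|)
  simp only [sq_abs, card_univ, Fintype.card_fin] at hcs
  have hnorm : √(∑ k, lam k ^ 2) * √(n : ℝ) ≤ β := (le_div_iff₀ (by positivity)).1 hlam
  rw [← Real.sqrt_mul (sum_nonneg fun k _ => sq_nonneg _), mul_comm] at hnorm
  calc ∑ k, |lam k| = √((∑ k, |lam k|) ^ 2) :=
        (Real.sqrt_sq (sum_nonneg fun k _ => abs_nonneg _)).symm
    _ ≤ √(n * ∑ k, lam k ^ 2) := Real.sqrt_le_sqrt hcs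
    _ ≤ β := hnorm

lemma abs_sum_mul_le_of_mem_lamSet {n : ℕ} {β : ℝ} (hβ : 0 ≤ β) {lam : Fin n → ℝ}
    (hlam : lam ∈ lamSet n β) {ψ : Fin n → ℝ} (hψ : ∀ k, |ψ k| ≤ 1) :
    |∑ k, lam k * ψ k| ≤ β :=
  (abs_sum_le_sum_abs _ _).trans <| (sum_le_sum fun k _ => by
    rw [abs_mul]; exact mul_le_of_le_one_right (abs_nonneg _) (hψ k)).trans
    (sum_abs_le_of_mem_lamSet hβ hlam)

lemma le_mul_csInf {S : Set ℝ} (hS : S.Nonempty) {x k : ℝ} (hk : 0 ≤ k)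
    (h : ∀ s ∈ S, x ≤ k * s) : x ≤ k * sInf S := by
  rw [← smul_eq_mul, ← Real.sInf_smul_of_nonneg hk]
  exact le_csInf hS.smul_set (by rintro _ ⟨s, hs, rfl⟩; exact h s hs)

lemma le_add_mul_add_csInf {S T : Set ℝ} (hS : S.Nonempty) (hT : T.Nonempty) {x y k b : ℝ}
    (hk : 0 ≤ k) (hb : 0 ≤ b) (h : ∀ s ∈ S, ∀ t ∈ T, x ≤ y + k * (b * s + t)) :
    x ≤ y + k * (b * sInf S + sInf T) := by
  have hS' (t : ℝ) (ht : t ∈ T) : x - y - k * t ≤ k * b * sInf S :=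
    le_mul_csInf hS (mul_nonneg hk hb) fun s hs => by linarith [h s hs t ht]
  have hT' : x - y - k * b * sInf S ≤ k * sInf T :=
    le_mul_csInf hT hk fun t ht => by linarith [hS' t ht]
  linarith

section Occupancy

variable {X A : Type*} [Fintype X] [Fintype A]

namespace FinMDP

variable (M : FinMDP X A) {ν' : X → ℝ} {π : X → A → ℝ}

lemma one_sub_γ_pos : 0 < 1 - M.γ := sub_pos.2 M.γ_lt_one

def nextStateDist (ν' : X → ℝ) (π : X → A → ℝ) (x' : X) : ℝ :=
  ∑ q : X × A, ν' q.1 * π q.1 q.2 * M.P q.1 q.2 x'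

lemma saDist_nonneg (hν : ∀ x, 0 ≤ ν' x) (hπ : ∀ x a, 0 ≤ π x a) (t : ℕ) (p : X × A) :
    0 ≤ M.saDist ν' π t p := by
  induction t generalizing p with
  | zero => exact mul_nonneg (hν p.1) (hπ p.1 p.2)
  | succ t ih =>
    exact mul_nonneg (sum_nonneg fun q _ => mul_nonneg (ih q) (M.P_nonneg _ _ _)) (hπ _ _)

lemma sum_saDist (hπ : IsPolicy π) (t : ℕ) : ∑ p, M.saDist ν' π t p = ∑ x, ν' x := by
  induction t with
  | zero => simp only [saDist, Fintype.sum_prod_type, ← mul_sum, hπ.2, mul_one]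
  | succ t ih =>
    calc ∑ p, M.saDist ν' π (t + 1) p
        = ∑ x', ∑ q, M.saDist ν' π t q * M.P q.1 q.2 x' := by
          rw [Fintype.sum_prod_type]
          simp only [saDist, ← mul_sum, hπ.2, mul_one]
      _ = ∑ q, M.saDist ν' π t q := by
          rw [sum_comm]
          simp only [← mul_sum, M.P_sum, mul_one]
      _ = _ := ih

lemma summable_saDist (hν : ∀ x, 0 ≤ ν' x) (hπ : IsPolicy π) (p : X × A) :
    Summable fun t => M.γ ^ t * M.saDist ν' π t p := by
  have hle (t : ℕ) : M.saDist ν' π t p ≤ ∑ x, ν' x :=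
    M.sum_saDist hπ t ▸ single_le_sum (fun q _ => M.saDist_nonneg hν hπ.1 t q) (mem_univ p)
  exact .of_nonneg_of_le
    (fun t => mul_nonneg (pow_nonneg M.γ_pos.le t) (M.saDist_nonneg hν hπ.1 t p))
    (fun t => mul_le_mul_of_nonneg_left (hle t) (pow_nonneg M.γ_pos.le t))
    ((summable_geometric_of_lt_one M.γ_pos.le M.γ_lt_one).mul_right _)

lemma occFrom_nonneg (hν : ∀ x, 0 ≤ ν' x) (hπ : ∀ x a, 0 ≤ π x a) (p : X × A) :
    0 ≤ M.occFrom ν' π p :=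
  mul_nonneg M.one_sub_γ_pos.le
    (tsum_nonneg fun t => mul_nonneg (pow_nonneg M.γ_pos.le t) (M.saDist_nonneg hν hπ t p))

lemma sum_occFrom (hν : ∀ x, 0 ≤ ν' x) (hπ : IsPolicy π) :
    ∑ p, M.occFrom ν' π p = ∑ x, ν' x := by
  simp only [occFrom, ← mul_sum]
  rw [← Summable.tsum_finsetSum fun p _ => M.summable_saDist hν hπ p]
  simp only [← mul_sum, M.sum_saDist hπ]
  rw [tsum_mul_right, tsum_geometric_of_lt_one M.γ_pos.le M.γ_lt_one,
    ← mul_assoc, mul_inv_cancel₀ M.one_sub_γ_pos.ne', one_mul]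

lemma isDist_occ (hπ : IsPolicy π) : IsDist (M.occ π) :=
  ⟨M.occFrom_nonneg M.ν_nonneg hπ.1, by rw [occ, M.sum_occFrom M.ν_nonneg hπ, M.ν_sum]⟩

lemma occFrom_eq_backward (hν : ∀ x, 0 ≤ ν' x) (hπ : IsPolicy π) (p : X × A) :
    M.occFrom ν' π p =
      ((1 - M.γ) * ν' p.1 + M.γ * ∑ q, M.occFrom ν' π q * M.P q.1 q.2 p.1) * π p.1 p.2 := by
  have htail : ∑' t, M.γ ^ (t + 1) * M.saDist ν' π (t + 1) p
      = M.γ * (∑ q, (∑' t, M.γ ^ t * M.saDist ν' π t q) * M.P q.1 q.2 p.1) * π p.1 p.2 := by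
    have hterm (t : ℕ) : M.γ ^ (t + 1) * M.saDist ν' π (t + 1) p
        = M.γ * π p.1 p.2 * ∑ q, M.γ ^ t * M.saDist ν' π t q * M.P q.1 q.2 p.1 := by
      simp only [saDist, pow_succ, mul_sum, sum_mul]
      exact sum_congr rfl fun q _ => by ring
    rw [tsum_congr hterm, tsum_mul_left, Summable.tsum_finsetSum fun q _ =>
      (M.summable_saDist hν hπ q).mul_right _]
    simp only [tsum_mul_right]
    ring
  simp only [occFrom]
  rw [(M.summable_saDist hν hπ p).tsum_eq_zero_add, htail]
  simp only [saDist, mul_assoc, ← mul_sum]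
  ring

lemma saDist_succ_eq_nextStateDist (t : ℕ) (p : X × A) :
    M.saDist ν' π (t + 1) p = M.saDist (M.nextStateDist ν' π) π t p := by
  induction t generalizing p with
  | zero => simp only [saDist, nextStateDist]
  | succ t ih =>
    show (∑ q, M.saDist ν' π (t + 1) q * _) * _
      = (∑ q, M.saDist (M.nextStateDist ν' π) π t q * _) * _
    simp only [ih]

lemma occFrom_eq_forward (hν : ∀ x, 0 ≤ ν' x) (hπ : IsPolicy π) (p : X × A) :
    M.occFrom ν' π p =
      (1 - M.γ) * (ν' p.1 * π p.1 p.2) + M.γ * M.occFrom (M.nextStateDist ν' π) π p := by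
  simp only [occFrom]
  rw [(M.summable_saDist hν hπ p).tsum_eq_zero_add]
  simp only [saDist_succ_eq_nextStateDist, pow_succ, mul_comm _ M.γ, mul_assoc, tsum_mul_left]
  simp only [saDist]
  ring

section Value

variable [DecidableEq X]

lemma saDist_eq_sum_indicator (t : ℕ) (p : X × A) :
    M.saDist ν' π t p = ∑ x, ν' x * M.saDist (fun y => if y = x then 1 else 0) π t p := by
  induction t generalizing p with
  | zero => simp [saDist]
  | succ t ih =>
    show (∑ q, M.saDist ν' π t q * _) * _ = ∑ x, ν' x * ((∑ q, M.saDist _ π t q * _) * _)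
    simp only [ih, sum_mul, mul_sum]
    rw [sum_comm]
    exact sum_congr rfl fun _ _ => sum_congr rfl fun _ _ => by ring

lemma occFrom_eq_sum_indicator (hπ : IsPolicy π) (p : X × A) :
    M.occFrom ν' π p = ∑ x, ν' x * M.occFrom (fun y => if y = x then 1 else 0) π p := by
  have hδ (x : X) : ∀ y : X, (0 : ℝ) ≤ if y = x then 1 else 0 := fun _ => by positivity
  have hterm (t : ℕ) : M.γ ^ t * M.saDist ν' π t p
      = ∑ x, ν' x * (M.γ ^ t * M.saDist (fun y => if y = x then 1 else 0) π t p) := by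
    rw [M.saDist_eq_sum_indicator, mul_sum]
    exact sum_congr rfl fun _ _ => by ring
  simp only [occFrom, tsum_congr hterm]
  rw [Summable.tsum_finsetSum fun x _ => (M.summable_saDist (hδ x) hπ p).mul_left (ν' x), mul_sum]
  exact sum_congr rfl fun _ _ => by rw [tsum_mul_left]; ring

lemma sum_occFrom_mul (hπ : IsPolicy π) (c : X × A → ℝ) :
    ∑ p, M.occFrom ν' π p * c p = ∑ x, ν' x * M.value c π x := by
  rw [sum_congr rfl fun p _ => by rw [M.occFrom_eq_sum_indicator hπ p]]
  simp only [value, sum_mul, mul_sum]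
  rw [sum_comm]
  exact sum_congr rfl fun _ _ => sum_congr rfl fun _ _ => by ring

lemma cost_eq_sum_value (hπ : IsPolicy π) (c : X × A → ℝ) :
    M.cost c π = ∑ x, M.ν x * M.value c π x :=
  M.sum_occFrom_mul hπ c

lemma nextStateDist_indicator (x x' : X) :
    M.nextStateDist (fun y => if y = x then 1 else 0) π x' = ∑ a, π x a * M.P x a x' := by
  simp [nextStateDist, Fintype.sum_prod_type]

lemma value_eq_bellman (hπ : IsPolicy π) (c : X × A → ℝ) (x : X) :
    M.value c π x = ∑ a, π x a *
      ((1 - M.γ) * c (x, a) + M.γ * ∑ x', M.P x a x' * M.value c π x') := by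
  have hδ : ∀ y : X, (0 : ℝ) ≤ if y = x then 1 else 0 := fun _ => by positivity
  calc M.value c π x
      = (1 - M.γ) * ∑ p : X × A, (if p.1 = x then 1 else 0) * π p.1 p.2 * c p
          + M.γ * ∑ p, M.occFrom (M.nextStateDist (fun y => if y = x then 1 else 0) π) π p
            * c p := by
        simp only [value, M.occFrom_eq_forward hδ hπ, mul_sum, ← sum_add_distrib]
        exact sum_congr rfl fun _ _ => by ring
    _ = (1 - M.γ) * ∑ a, π x a * c (x, a)
          + M.γ * ∑ x', (∑ a, π x a * M.P x a x') * M.value c π x' := by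
        simp [M.sum_occFrom_mul hπ, nextStateDist_indicator, Fintype.sum_prod_type]
    _ = _ := by
      simp only [mul_add, sum_add_distrib, sum_mul, mul_sum]
      rw [sum_comm (s := univ) (t := univ) (f := fun x' a => M.γ * (π x a * M.P x a x' * _))]
      congr 1
      · exact sum_congr rfl fun _ _ => by ring
      · exact sum_congr rfl fun _ _ => sum_congr rfl fun _ _ => by ring

end Value

end FinMDP

end Occupancy

section Bellman

variable {X A : Type*} [Fintype X] [Fintype A]

namespace FinMDP

variable (M : FinMDP X A) {ν' : X → ℝ} {π : X → A → ℝ}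

lemma sum_mul_Tadj (μ : X × A → ℝ) (u : X → ℝ) :
    ∑ p, μ p * M.Tadj u p = ∑ x, M.Tflow μ x * u x := by
  have hstay : ∑ p : X × A, μ p * u p.1 = ∑ x, (∑ a, μ (x, a)) * u x := by
    simp only [Fintype.sum_prod_type, sum_mul]
  have hmove : ∑ p : X × A, μ p * ∑ x', M.P p.1 p.2 x' * u x'
      = ∑ x', (∑ p : X × A, μ p * M.P p.1 p.2 x') * u x' := by
    simp only [mul_sum, sum_mul, mul_assoc]
    exact sum_comm
  calc ∑ p, μ p * M.Tadj u p
      = 1 / (1 - M.γ) * (∑ p : X × A, μ p * u p.1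
          - M.γ * ∑ p : X × A, μ p * ∑ x', M.P p.1 p.2 x' * u x') := by
        rw [mul_sub, mul_sum, mul_sum, mul_sum, ← sum_sub_distrib]
        exact sum_congr rfl fun _ _ => by rw [Tadj]; ring
    _ = ∑ x, M.Tflow μ x * u x := by
        rw [hstay, hmove, mul_sub, mul_sum, mul_sum, mul_sum, ← sum_sub_distrib]
        exact sum_congr rfl fun _ _ => by rw [Tflow]; ring

lemma Tflow_occFrom (hν : ∀ x, 0 ≤ ν' x) (hπ : IsPolicy π) (x : X) :
    M.Tflow (M.occFrom ν' π) x = ν' x := by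
  have hinflow : ∑ a, M.occFrom ν' π (x, a)
      = (1 - M.γ) * ν' x + M.γ * ∑ q, M.occFrom ν' π q * M.P q.1 q.2 x := by
    rw [sum_congr rfl fun a _ => M.occFrom_eq_backward hν hπ (x, a)]
    dsimp only
    rw [← mul_sum, hπ.2, mul_one]
  rw [Tflow, hinflow]
  field_simp [M.one_sub_γ_pos.ne']
  ring

lemma sum_occ_mul_Tadj (hπ : IsPolicy π) (u : X → ℝ) :
    ∑ p, M.occ π p * M.Tadj u p = ∑ x, M.ν x * u x := by
  simp only [sum_mul_Tadj, occ, M.Tflow_occFrom M.ν_nonneg hπ]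

lemma sum_policy_mul_Tadj_value [DecidableEq X] (hπ : IsPolicy π) (c : X × A → ℝ) (x : X) :
    ∑ a, π x a * M.Tadj (M.value c π) (x, a) = ∑ a, π x a * c (x, a) := by
  have hbellman : M.value c π x = (1 - M.γ) * ∑ a, π x a * c (x, a)
      + M.γ * ∑ a, π x a * ∑ x', M.P x a x' * M.value c π x' := by
    conv_lhs => rw [M.value_eq_bellman hπ c x]
    simp only [mul_add, sum_add_distrib, mul_sum]
    congr 1
    · exact sum_congr rfl fun _ _ => by ring
    · exact sum_congr rfl fun _ _ => sum_congr rfl fun _ _ => by ring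
  have hV : ∑ a, π x a * M.value c π x = M.value c π x := by rw [← sum_mul, hπ.2, one_mul]
  apply mul_left_cancel₀ M.one_sub_γ_pos.ne'
  calc (1 - M.γ) * ∑ a, π x a * M.Tadj (M.value c π) (x, a)
      = ∑ a, π x a * M.value c π x
          - M.γ * ∑ a, π x a * ∑ x', M.P x a x' * M.value c π x' := by
        rw [mul_sum, mul_sum, ← sum_sub_distrib]
        exact sum_congr rfl fun _ _ => by rw [Tadj]; field_simp [M.one_sub_γ_pos.ne']
    _ = _ := by rw [hV, hbellman]; ring

lemma abs_Tadj_le {u : X → ℝ} {B : ℝ} (hu : ∀ x, |u x| ≤ B) (p : X × A) :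
    |M.Tadj u p| ≤ (1 + M.γ) / (1 - M.γ) * B := by
  have hPu : |∑ x', M.P p.1 p.2 x' * u x'| ≤ B := calc
    |∑ x', M.P p.1 p.2 x' * u x'| ≤ ∑ x', M.P p.1 p.2 x' * B :=
      (abs_sum_le_sum_abs _ _).trans <| sum_le_sum fun x' _ => by
        rw [abs_mul, abs_of_nonneg (M.P_nonneg _ _ _)]
        exact mul_le_mul_of_nonneg_left (hu x') (M.P_nonneg _ _ _)
    _ = B := by rw [← sum_mul, M.P_sum, one_mul]
  have hdiff : |u p.1 - M.γ * ∑ x', M.P p.1 p.2 x' * u x'| ≤ (1 + M.γ) * B := by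
    have := abs_sub (u p.1) (M.γ * ∑ x', M.P p.1 p.2 x' * u x')
    rw [abs_mul, abs_of_pos M.γ_pos] at this
    nlinarith [hu p.1, M.γ_pos]
  rw [Tadj, abs_mul, abs_of_pos (one_div_pos.2 M.one_sub_γ_pos), one_div_mul_eq_div,
    div_mul_eq_mul_div]
  exact div_le_div_of_nonneg_right hdiff M.one_sub_γ_pos.le

lemma sum_abs_Tflow_sub_le {μ : X × A → ℝ} (hμ : IsDist μ) :
    ∑ x, |M.Tflow μ x - M.ν x| ≤ 2 / (1 - M.γ) := by
  have hx (x : X) : |M.Tflow μ x - M.ν x|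
      ≤ ((∑ a, μ (x, a)) + M.γ * ∑ p, μ p * M.P p.1 p.2 x) / (1 - M.γ) + M.ν x := by
    have hm : 0 ≤ ∑ a, μ (x, a) := sum_nonneg fun a _ => hμ.1 _
    have hs : 0 ≤ ∑ p, μ p * M.P p.1 p.2 x :=
      sum_nonneg fun p _ => mul_nonneg (hμ.1 p) (M.P_nonneg _ _ _)
    refine (abs_sub _ _).trans (add_le_add ?_ (abs_of_nonneg (M.ν_nonneg x)).le)
    rw [Tflow, one_div_mul_eq_div, abs_div, abs_of_pos M.one_sub_γ_pos]
    refine div_le_div_of_nonneg_right (abs_le.2 ⟨?_, ?_⟩) M.one_sub_γ_pos.le <;>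
      nlinarith [M.γ_pos]
  have hmass : ∑ x, ∑ a, μ (x, a) = 1 := by rw [← Fintype.sum_prod_type', hμ.2]
  have hflow : ∑ x, ∑ p, μ p * M.P p.1 p.2 x = 1 := by
    rw [sum_comm]; simp only [← mul_sum, M.P_sum, mul_one, hμ.2]
  calc ∑ x, |M.Tflow μ x - M.ν x|
      ≤ ∑ x, (((∑ a, μ (x, a)) + M.γ * ∑ p, μ p * M.P p.1 p.2 x) / (1 - M.γ) + M.ν x) :=
        sum_le_sum fun x _ => hx x
    _ = 2 / (1 - M.γ) := by
        rw [sum_add_distrib, ← sum_div, sum_add_distrib, ← mul_sum, hmass, hflow, M.ν_sum]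
        field_simp [M.one_sub_γ_pos.ne']
        ring

end FinMDP

end Bellman

section InducedPolicy

variable {X A : Type*} [Fintype A] {μ : X × A → ℝ}

lemma isPolicy_inducedPolicy [Nonempty A] (hμ : ∀ p, 0 ≤ μ p) :
    FinMDP.IsPolicy (inducedPolicy μ) := by
  refine ⟨fun x a => ?_, fun x => ?_⟩ <;> unfold inducedPolicy <;> split_ifs with h
  · positivity
  · exact div_nonneg (hμ _) (sum_nonneg fun _ _ => hμ _)
  · simp
  · rw [← sum_div, div_self h]

lemma sum_mul_inducedPolicy (hμ : ∀ p, 0 ≤ μ p) (x : X) (a : A) :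
    (∑ a', μ (x, a')) * inducedPolicy μ x a = μ (x, a) := by
  unfold inducedPolicy
  split_ifs with h
  · rw [h, zero_mul, (sum_eq_zero_iff_of_nonneg fun _ _ => hμ _).1 h a (mem_univ a)]
  · field_simp

lemma sum_mul_eq_mul_sum_inducedPolicy (hμ : ∀ p, 0 ≤ μ p) (x : X) (f : A → ℝ) :
    ∑ a, μ (x, a) * f a = (∑ a', μ (x, a')) * ∑ a, inducedPolicy μ x a * f a := by
  rw [mul_sum]
  exact sum_congr rfl fun a _ => by rw [← mul_assoc, sum_mul_inducedPolicy hμ]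

/-- The Bellman equation of `π_μ`, integrated against `μ`. -/
lemma FinMDP.sum_mul_Tadj_value_inducedPolicy [Fintype X] [DecidableEq X] [Nonempty A]
    (M : FinMDP X A) (hμ : ∀ p, 0 ≤ μ p) (c : X × A → ℝ) :
    ∑ p, μ p * M.Tadj (M.value c (inducedPolicy μ)) p = ∑ p, μ p * c p := by
  rw [Fintype.sum_prod_type, Fintype.sum_prod_type]
  refine sum_congr rfl fun x _ => ?_
  rw [sum_mul_eq_mul_sum_inducedPolicy hμ x, sum_mul_eq_mul_sum_inducedPolicy hμ x,
    M.sum_policy_mul_Tadj_value (isPolicy_inducedPolicy hμ)]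

end InducedPolicy

section SaddlePoint

variable {X A : Type*} [Fintype X] [Fintype A]

lemma isDist_sum_mul {n : ℕ} {Φ : Fin n → X × A → ℝ} (hΦ : ∀ i, IsDist (Φ i))
    {θ : Fin n → ℝ} (hθ : simplexPt θ) : IsDist fun p => ∑ i, θ i * Φ i p := by
  refine ⟨fun p => sum_nonneg fun i _ => mul_nonneg (hθ.1 i) ((hΦ i).1 p), ?_⟩
  rw [sum_comm]
  simp only [← mul_sum, (hΦ _).2, mul_one, hθ.2]

lemma l1_sub_le_two {μ μ' : X × A → ℝ} (hμ : IsDist μ) (hμ' : IsDist μ') :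
    l1 (fun p => μ p - μ' p) ≤ 2 := calc
  l1 (fun p => μ p - μ' p) ≤ ∑ p, (μ p + μ' p) := sum_le_sum fun p _ =>
      (abs_sub _ _).trans_eq (by rw [abs_of_nonneg (hμ.1 p), abs_of_nonneg (hμ'.1 p)])
  _ = 2 := by rw [sum_add_distrib, hμ.2, hμ'.2]; norm_num

namespace FinMDP

variable (M : FinMDP X A)

lemma abs_sub_Tadj_le {g : ℝ} (hg : |g| ≤ 1) {u : X → ℝ} {β : ℝ} (hu : ∀ x, |u x| ≤ β)
    (hβ : 1 ≤ β) (p : X × A) : |g - M.Tadj u p| ≤ 2 * β / (1 - M.γ) := by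
  have hβ' : 2 * β / (1 - M.γ) = 1 + (1 + M.γ) / (1 - M.γ) * β + (β - 1) := by
    field_simp [M.one_sub_γ_pos.ne']
    ring
  linarith [abs_sub g (M.Tadj u p), M.abs_Tadj_le hu p]

lemma cost_inducedPolicy_sub_cost_eq [DecidableEq X] [Nonempty A] {μ : X × A → ℝ}
    (hμ : ∀ p, 0 ≤ μ p) (c : X × A → ℝ) {πE : X → A → ℝ} (hπE : IsPolicy πE) (u : X → ℝ) :
    M.cost c (inducedPolicy μ) - M.cost c πE
      = ∑ p, (μ p - M.occ πE p) * (c p - M.Tadj u p)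
        + ∑ x, (M.Tflow μ x - M.ν x) * (u x - M.value c (inducedPolicy μ) x) := by
  have hc := M.sum_mul_Tadj_value_inducedPolicy hμ c
  rw [sum_mul_Tadj] at hc
  simp only [sub_mul, mul_sub, sum_sub_distrib]
  rw [M.cost_eq_sum_value (isPolicy_inducedPolicy hμ), ← hc, M.sum_mul_Tadj,
    M.sum_occ_mul_Tadj hπE, cost]
  ring

lemma sum_occ_sub_mul_costW_le_gapMax {nc : ℕ} [NeZero nc] (c : Fin nc → X × A → ℝ)
    {w : Fin nc → ℝ} (hw : simplexPt w) (π πE : X → A → ℝ) :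
    ∑ p, (M.occ π p - M.occ πE p) * costW c w p ≤ gapMax M c πE π := by
  have hsum : ∑ p, (M.occ π p - M.occ πE p) * costW c w p
      = ∑ j, w j * (M.cost (c j) π - M.cost (c j) πE) := by
    simp only [costW, cost, mul_sum, ← sum_sub_distrib]
    rw [sum_comm]
    exact sum_congr rfl fun _ _ => sum_congr rfl fun _ _ => by ring
  calc _ = ∑ j, w j * (M.cost (c j) π - M.cost (c j) πE) := hsum
    _ ≤ ∑ j, w j * gapMax M c πE π := sum_le_sum fun j _ => mul_le_mul_of_nonneg_left
        (le_sup' (fun j => M.cost (c j) π - M.cost (c j) πE) (mem_univ j)) (hw.1 j)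
    _ = gapMax M c πE π := by rw [← sum_mul, hw.2, one_mul]

lemma gapMax_eq_of_forall_le {nc : ℕ} [NeZero nc] {c : Fin nc → X × A → ℝ}
    {π πE : X → A → ℝ} {i : Fin nc}
    (hi : ∀ j, M.cost (c j) π - M.cost (c j) πE ≤ M.cost (c i) π - M.cost (c i) πE) :
    gapMax M c πE π = M.cost (c i) π - M.cost (c i) πE :=
  le_antisymm (sup'_le _ _ fun j _ => hi j)
    (le_sup' (fun j => M.cost (c j) π - M.cost (c j) πE) (mem_univ i))

lemma gapMax_inducedPolicy_le [DecidableEq X] [Nonempty X] [Nonempty A] {nc : ℕ} [NeZero nc]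
    {c : Fin nc → X × A → ℝ} {πE : X → A → ℝ} (hπE : IsPolicy πE) {μ : X × A → ℝ}
    (hμ : IsDist μ) {i : Fin nc}
    (hi : ∀ j, M.cost (c j) (inducedPolicy μ) - M.cost (c j) πE
      ≤ M.cost (c i) (inducedPolicy μ) - M.cost (c i) πE) (u : X → ℝ) :
    gapMax M c πE (inducedPolicy μ) ≤ ∑ p, (μ p - M.occ πE p) * (c i p - M.Tadj u p)
      + 2 / (1 - M.γ) * linf (fun x => u x - M.value (c i) (inducedPolicy μ) x) := by
  rw [M.gapMax_eq_of_forall_le hi, M.cost_inducedPolicy_sub_cost_eq hμ.1 _ hπE u]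
  have herr : ∑ x, (M.Tflow μ x - M.ν x) * (u x - M.value (c i) (inducedPolicy μ) x)
      ≤ 2 / (1 - M.γ) * linf (fun x => u x - M.value (c i) (inducedPolicy μ) x) := calc
    _ ≤ l1 (fun x => M.Tflow μ x - M.ν x)
          * linf (fun x => u x - M.value (c i) (inducedPolicy μ) x) :=
        (le_abs_self _).trans (abs_sum_mul_le_l1_mul _ _ (abs_le_linf _))
    _ ≤ _ := mul_le_mul_of_nonneg_right (M.sum_abs_Tflow_sub_le hμ)
        ((abs_nonneg _).trans (abs_le_linf _ (Classical.arbitrary X)))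
  linarith

lemma sum_sub_occ_mul_sub_Tadj_le {nc : ℕ} [NeZero nc] {c : Fin nc → X × A → ℝ}
    (hc : ∀ j p, |c j p| ≤ 1) {w : Fin nc → ℝ} (hw : simplexPt w) {πE πA : X → A → ℝ}
    (hπE : IsPolicy πE) (hπA : IsPolicy πA) {u : X → ℝ} {β : ℝ} (hu : ∀ x, |u x| ≤ β)
    (hβ : 1 ≤ β) (μ : X × A → ℝ) :
    ∑ p, (μ p - M.occ πE p) * (costW c w p - M.Tadj u p)
      ≤ gapMax M c πE πA + 2 / (1 - M.γ) * (β * l1 (fun p => μ p - M.occ πA p)) := by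
  have hsplit : ∑ p, (μ p - M.occ πE p) * (costW c w p - M.Tadj u p)
      = ∑ p, (M.occ πA p - M.occ πE p) * costW c w p
        + ∑ p, (μ p - M.occ πA p) * (costW c w p - M.Tadj u p) := by
    have hT := (M.sum_occ_mul_Tadj hπA u).trans (M.sum_occ_mul_Tadj hπE u).symm
    simp only [sub_mul, mul_sub, sum_sub_distrib] at hT ⊢
    linarith
  have herr : |∑ p, (μ p - M.occ πA p) * (costW c w p - M.Tadj u p)|
      ≤ l1 (fun p => μ p - M.occ πA p) * (2 * β / (1 - M.γ)) :=
    abs_sum_mul_le_l1_mul _ _ fun p =>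
    M.abs_sub_Tadj_le (abs_sum_mul_le_one_of_simplexPt hw fun j => hc j p) hu hβ p
  have hconst : l1 (fun p => μ p - M.occ πA p) * (2 * β / (1 - M.γ))
      = 2 / (1 - M.γ) * (β * l1 (fun p => μ p - M.occ πA p)) := by ring
  rw [hsplit]
  linarith [M.sum_occ_sub_mul_costW_le_gapMax c hw πA πE, le_abs_self
    (∑ p, (μ p - M.occ πA p) * (costW c w p - M.Tadj u p))]

end FinMDP

end SaddlePoint

section Lagrangian

variable {X A : Type*} [Fintype X] [Fintype A] {nm nu nc : ℕ}

lemma abs_Lr_le (M : FinMDP X A) {Φ : Fin nm → X × A → ℝ} (hΦ : ∀ i, IsDist (Φ i))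
    {Ψ : Fin nu → X → ℝ} (hΨ : ∀ k x, |Ψ k x| ≤ 1) {c : Fin nc → X × A → ℝ}
    (hc : ∀ j p, |c j p| ≤ 1) {β : ℝ} (hβ : 1 ≤ β) {πE : X → A → ℝ} (hπE : FinMDP.IsPolicy πE)
    {θ : Fin nm → ℝ} (hθ : simplexPt θ) {lam : Fin nu → ℝ} (hlam : lam ∈ lamSet nu β)
    {w : Fin nc → ℝ} (hw : simplexPt w) :
    |Lr M Φ Ψ c πE θ lam w| ≤ 2 * (2 * β / (1 - M.γ)) := by
  have hu (x : X) : |∑ k, lam k * Ψ k x| ≤ β :=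
    abs_sum_mul_le_of_mem_lamSet (by linarith) hlam fun k => hΨ k x
  refine (abs_sum_mul_le_l1_mul _ _ fun p => M.abs_sub_Tadj_le
    (abs_sum_mul_le_one_of_simplexPt hw fun j => hc j p) hu hβ p).trans ?_
  have := M.one_sub_γ_pos
  exact mul_le_mul_of_nonneg_right (l1_sub_le_two (isDist_sum_mul hΦ hθ) (M.isDist_occ hπE))
    (by positivity)

lemma Lr_single (M : FinMDP X A) (Φ : Fin nm → X × A → ℝ) (Ψ : Fin nu → X → ℝ)
    (c : Fin nc → X × A → ℝ) (πE : X → A → ℝ) (θ : Fin nm → ℝ) (lam : Fin nu → ℝ)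
    (i : Fin nc) :
    Lr M Φ Ψ c πE θ lam (Pi.single i 1) = ∑ p, ((∑ k, θ k * Φ k p) - M.occ πE p) *
      (c i p - M.Tadj (fun x => ∑ k, lam k * Ψ k x) p) := by
  simp [Lr, Pi.single_apply]

end Lagrangian

/-- From approximate saddle points to nearly optimal policies: the
suboptimality gap of the policy `π_θ` extracted from a feasible point `(θ, λ, w)`
is bounded by the saddle-point residual plus the approximation error. -/
theorem saddle_point_to_policy (M : FinMDP X A) {nm nu nc : ℕ} [NeZero nc]
    (Φ : Fin nm → X × A → ℝ) (hΦ : ∀ i, IsDist (Φ i))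
    (Ψ : Fin nu → X → ℝ) (hΨ : ∀ k x, |Ψ k x| ≤ 1)
    (c : Fin nc → X × A → ℝ) (hc : ∀ j p, |c j p| ≤ 1)
    (β : ℝ) (hβ : 2 ≤ β)
    (πE : X → A → ℝ) (hπE : FinMDP.IsPolicy πE)
    (πA : X → A → ℝ) (hπA : IsApprentice M c πE πA)
    (θ : Fin nm → ℝ) (hθ : simplexPt θ)
    (lam : Fin nu → ℝ) (hlam : lam ∈ lamSet nu β)
    (w : Fin nc → ℝ) (hw : simplexPt w)
    (iθ : Fin nc)
    (hiθ : ∀ j, M.cost (c j) (inducedPolicy (fun p => ∑ i, θ i * Φ i p))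
          - M.cost (c j) πE
        ≤ M.cost (c iθ) (inducedPolicy (fun p => ∑ i, θ i * Φ i p))
          - M.cost (c iθ) πE) :
    gapMax M c πE (inducedPolicy (fun p => ∑ i, θ i * Φ i p)) - gapMax M c πE πA
      ≤ epsSad M Φ Ψ c πE β θ lam w
        + 2 / (1 - M.γ) *
          (β * sInf {v : ℝ | ∃ θ', simplexPt θ' ∧
              v = l1 (fun p : X × A => (∑ i, θ' i * Φ i p) - M.occ πA p)}
            + sInf {v : ℝ | ∃ lam' ∈ lamSet nu β,
              v = linf (fun x => (∑ k, lam' k * Ψ k x)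
                - M.value (c iθ) (inducedPolicy (fun p => ∑ i, θ i * Φ i p)) x)}) := by
  have hβ1 : 1 ≤ β := by linarith
  refine le_add_mul_add_csInf ?_ ?_ (div_nonneg zero_le_two M.one_sub_γ_pos.le) (by linarith) ?_
  · exact ⟨_, θ, hθ, rfl⟩
  · exact ⟨_, lam, hlam, rfl⟩
  rintro _ ⟨θ', hθ', rfl⟩ _ ⟨lam', hlam', rfl⟩
  have hgapθ := M.gapMax_inducedPolicy_le hπE (isDist_sum_mul hΦ hθ) hiθ
    (fun x => ∑ k, lam' k * Ψ k x)
  have hLr {θ'' lam'' w''} (hθ'' : simplexPt θ'') (hlam'' : lam'' ∈ lamSet nu β)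
      (hw'' : simplexPt w'') := abs_Lr_le M hΦ hΨ hc hβ1 hπE hθ'' hlam'' hw''
  have hsup : Lr M Φ Ψ c πE θ lam' (Pi.single iθ 1)
      ≤ sSup {v | ∃ lam' ∈ lamSet nu β, ∃ w', simplexPt w' ∧ v = Lr M Φ Ψ c πE θ lam' w'} :=
    le_csSup ⟨_, by rintro _ ⟨_, hl, _, hv, rfl⟩; exact (le_abs_self _).trans (hLr hθ hl hv)⟩
      ⟨lam', hlam', _, simplexPt_single iθ, rfl⟩
  have hinf : sInf {v | ∃ θ', simplexPt θ' ∧ v = Lr M Φ Ψ c πE θ' lam w}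
      ≤ Lr M Φ Ψ c πE θ' lam w :=
    csInf_le ⟨_, by rintro _ ⟨_, ht, rfl⟩; exact neg_le_of_abs_le (hLr ht hlam hw)⟩ ⟨θ', hθ', rfl⟩
  have hgapA : Lr M Φ Ψ c πE θ' lam w ≤ gapMax M c πE πA
      + 2 / (1 - M.γ) * (β * l1 (fun p => (∑ i, θ' i * Φ i p) - M.occ πA p)) :=
    M.sum_sub_occ_mul_sub_Tadj_le hc hw hπE hπA.1
      (fun x => abs_sum_mul_le_of_mem_lamSet (by linarith) hlam fun k => hΨ k x) hβ1 _
  rw [Lr_single] at hsup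
  rw [epsSad, mul_add]
  linarith
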